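/- Let φ : ℝⁿ → ℝ ∪ {+∞} be a proper lower semicontinuous convex function with φ(0) = 0. Then φ is a generalized quadratic form (i.e., dom φ is a linear subspace S of ℝⁿ and there is a symmetric linear operator L : S → ℝⁿ with φ(x) = ⟨Lx, x⟩ for all x ∈ S) if and only if the graph of ∂φ is a linear subspace of ℝⁿ × ℝⁿ. -/

import Mathlib

/-!
If `φ = ⟪L ·, ·⟫` on `S` and `φ = ⊤` off `S`, convexity makes `L` positive semidefinite, and
expanding `φ (x + t • u)` in `t` shows `∂φ x = 2 • L x + Sᗮ` for `x ∈ S` and `∂φ x = ∅` otherwise,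
so the graph of `∂φ` is the image of `(s, w) ↦ (s, 2 • L s + w)` on `S × Sᗮ`.

Conversely, let the graph `G` of `∂φ` be a subspace. For `(x, v) ∈ G` all `(t • x, t • v)` lie in
`G`, so `t ↦ φ (t • x)` has derivative `t * ⟪v, x⟫`, whence `φ x = ⟪v, x⟫ / 2`. Testing the
subgradient inequality at `x` against `x + t • y` then gives `⟪v, y⟫ = ⟪w, x⟫` for
`(x, v), (y, w) ∈ G`, so any linear section `s ↦ (s, 2 • L s)` of the first projection of `G` onto
its image `S` yields a symmetric `L` with `φ = ⟪L ·, ·⟫` on `S`. Finally `dom φ ⊆ S`: the minimiser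
`p` of `φ + c * ‖· - x‖ ^ 2` carries the subgradient `2 * c • (x - p)` and tends to `x` as `c → ∞`,
so `dom φ ⊆ closure (dom ∂φ) ⊆ closure S = S`.
-/

open scoped RealInnerProductSpace
open Filter Topology Classical

noncomputable section

def Subdiff {n : ℕ} (f : EuclideanSpace ℝ (Fin n) → EReal) (x : EuclideanSpace ℝ (Fin n)) :
    Set (EuclideanSpace ℝ (Fin n)) :=
  {v | ∀ y, f x + ((⟪v, y - x⟫ : ℝ) : EReal) ≤ f y}

def ProperFn {n : ℕ} (f : EuclideanSpace ℝ (Fin n) → EReal) : Prop :=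
  (∀ x, f x ≠ ⊥) ∧ ∃ x, f x ≠ ⊤

def ConvexFn {n : ℕ} (f : EuclideanSpace ℝ (Fin n) → EReal) : Prop :=
  ∀ x y : EuclideanSpace ℝ (Fin n), ∀ a b : ℝ, 0 ≤ a → 0 ≤ b → a + b = 1 →
    f (a • x + b • y) ≤ (a : EReal) * f x + (b : EReal) * f y

/-- `φ` is a generalized quadratic form: its effective domain is a linear
subspace `S` and it equals `x ↦ ⟨Lx, x⟩` on `S` for a symmetric linear `L : S → ℝⁿ`. -/
def IsGQF {n : ℕ} (φ : EuclideanSpace ℝ (Fin n) → EReal) : Prop :=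
  ∃ (S : Submodule ℝ (EuclideanSpace ℝ (Fin n)))
    (L : S →ₗ[ℝ] EuclideanSpace ℝ (Fin n)),
    (∀ x y : S, ⟪L x, (y : EuclideanSpace ℝ (Fin n))⟫ =
      ⟪(x : EuclideanSpace ℝ (Fin n)), L y⟫) ∧
    ∀ x : EuclideanSpace ℝ (Fin n),
      φ x = if h : x ∈ S then ((⟪L ⟨x, h⟩, x⟫ : ℝ) : EReal) else ⊤

lemma nonpos_of_forall_mul_le_sq_mul {a b : ℝ} (H : ∀ t : ℝ, 0 < t → t ≤ 1 → t * a ≤ t ^ 2 * b) :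
    a ≤ 0 := by
  by_contra! ha
  rcases le_or_gt b 0 with hb | hb
  · nlinarith [H 1 one_pos le_rfl]
  · set t := min 1 (a / (2 * b))
    have ht : 0 < t := lt_min one_pos (by positivity)
    have htb : t * b ≤ a / 2 := by
      calc t * b ≤ a / (2 * b) * b := by gcongr; exact min_le_right _ _
        _ = a / 2 := by field_simp
    nlinarith [H t ht (min_le_left _ _)]

lemma eq_zero_of_forall_mul_le_sq_mul {a b : ℝ} (H : ∀ t : ℝ, t * a ≤ t ^ 2 * b) : a = 0 := by
  have h₁ := nonpos_of_forall_mul_le_sq_mul (a := a) (b := b) fun t _ _ => H t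
  have h₂ := nonpos_of_forall_mul_le_sq_mul (a := -a) (b := b) fun t _ _ => by
    simpa using H (-t)
  linarith

lemma eq_of_abs_sub_le_mul_sq {h : ℝ → ℝ} {K : ℝ} (H : ∀ s t, |h s - h t| ≤ K * (s - t) ^ 2)
    (a b : ℝ) : h a = h b := by
  have hderiv : ∀ t, HasDerivAt h 0 t := fun t => by
    rw [hasDerivAt_iff_isLittleO_nhds_zero]
    simp only [smul_zero, sub_zero]
    refine Asymptotics.IsBigO.trans_isLittleO (g := fun k => k ^ 2) ?_
      (Asymptotics.isLittleO_pow_id one_lt_two)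
    refine Asymptotics.IsBigO.of_bound K (Eventually.of_forall fun k => ?_)
    simpa [Real.norm_eq_abs] using H (t + k) t
  exact is_const_of_deriv_eq_zero (fun t => (hderiv t).differentiableAt)
    (fun t => (hderiv t).deriv) a b

lemma LowerSemicontinuous.exists_forall_le_of_isBounded {α β : Type*} [PseudoMetricSpace α]
    [ProperSpace α] [LinearOrder β] {f : α → β} (hf : LowerSemicontinuous f) (x : α)
    (hb : Bornology.IsBounded {y | f y ≤ f x}) : ∃ p, ∀ y, f p ≤ f y := by
  have hK : IsCompact {y | f y ≤ f x} :=
    Metric.isCompact_of_isClosed_isBounded (hf.isClosed_preimage (f x)) hb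
  obtain ⟨p, hpK, hp⟩ :=
    (hf.lowerSemicontinuousOn _).exists_isMinOn ⟨x, show f x ≤ f x from le_rfl⟩ hK
  refine ⟨p, fun y => ?_⟩
  by_cases hy : f y ≤ f x
  · exact hp hy
  · exact (show f p ≤ f x from hpK).trans (not_le.mp hy).le

section Subdifferential

variable {n : ℕ} {φ : EuclideanSpace ℝ (Fin n) → EReal} {x y v : EuclideanSpace ℝ (Fin n)}

local notation "E" => EuclideanSpace ℝ (Fin n)

lemma ne_top_of_mem_subdiff (hy : φ y ≠ ⊤) (hv : v ∈ Subdiff φ x) : φ x ≠ ⊤ := by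
  intro hx
  have := hv y
  rw [hx, EReal.top_add_of_ne_bot (EReal.coe_ne_bot _), top_le_iff] at this
  exact hy this

lemma mem_subdiff_iff_toReal (hbot : ∀ y, φ y ≠ ⊥) (hx : φ x ≠ ⊤) :
    v ∈ Subdiff φ x ↔ ∀ y, φ y ≠ ⊤ → (φ x).toReal + ⟪v, y - x⟫ ≤ (φ y).toReal := by
  refine forall_congr' fun y => ?_
  by_cases hy : φ y = ⊤
  · simp [hy]
  · rw [← EReal.coe_toReal hx (hbot x), ← EReal.coe_toReal hy (hbot y), ← EReal.coe_add,
      EReal.coe_le_coe_iff]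
    simp

lemma toReal_eq_half_inner_of_forall_smul_mem_subdiff (hbot : ∀ x, φ x ≠ ⊥) (h0 : φ 0 = 0)
    (hline : ∀ t : ℝ, t • v ∈ Subdiff φ (t • x)) : (φ x).toReal = ⟪v, x⟫ / 2 := by
  set c := ⟪v, x⟫
  set g : ℝ → ℝ := fun t => (φ (t • x)).toReal
  have hsub : ∀ s t : ℝ, g t + t * (s - t) * c ≤ g s := fun s t => by
    have hfin : ∀ r : ℝ, φ (r • x) ≠ ⊤ := fun r =>
      ne_top_of_mem_subdiff (y := 0) (by simp [h0]) (hline r)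
    have h := (mem_subdiff_iff_toReal hbot (hfin t)).mp (hline t) (s • x) (hfin s)
    rwa [← sub_smul, real_inner_smul_left, real_inner_smul_right, ← mul_assoc] at h
  have hconst := eq_of_abs_sub_le_mul_sq (h := fun t => g t - c * t ^ 2 / 2) (K := c / 2)
    (fun s t => abs_le.mpr ⟨by nlinarith [hsub s t], by nlinarith [hsub t s]⟩) 1 0
  have hg0 : g 0 = 0 := by simp [g, h0]
  simp only [g, one_smul] at hconst hg0
  linarith

end Subdifferential

section QuadraticForm

variable {F : Type*} [NormedAddCommGroup F] [InnerProductSpace ℝ F] {S : Submodule ℝ F}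
  {L : S →ₗ[ℝ] F}

lemma inner_map_add_smul_self (hsym : ∀ x y : S, ⟪L x, (y : F)⟫ = ⟪(x : F), L y⟫)
    (x u : S) (t : ℝ) :
    ⟪L (x + t • u), ((x + t • u : S) : F)⟫ =
      ⟪L x, (x : F)⟫ + 2 * t * ⟪L x, (u : F)⟫ + t ^ 2 * ⟪L u, (u : F)⟫ := by
  have hux : ⟪L u, (x : F)⟫ = ⟪L x, (u : F)⟫ := by rw [hsym, real_inner_comm]
  simp only [map_add, map_smul, Submodule.coe_add, Submodule.coe_smul, inner_add_left,
    inner_add_right, real_inner_smul_left, real_inner_smul_right, hux]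
  ring

end QuadraticForm

section GQF

variable {n : ℕ} {φ : EuclideanSpace ℝ (Fin n) → EReal}
  {S : Submodule ℝ (EuclideanSpace ℝ (Fin n))} {L : S →ₗ[ℝ] EuclideanSpace ℝ (Fin n)}

local notation "E" => EuclideanSpace ℝ (Fin n)

lemma apply_coe_of_gqf (hφ : ∀ x : E, φ x = if h : x ∈ S then ((⟪L ⟨x, h⟩, x⟫ : ℝ) : EReal) else ⊤)
    (s : S) : φ s = ((⟪L s, (s : E)⟫ : ℝ) : EReal) := by
  simp [hφ]

lemma inner_map_self_nonneg_of_gqf (hconv : ConvexFn φ) (h0 : φ 0 = 0)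
    (hφ : ∀ x : E, φ x = if h : x ∈ S then ((⟪L ⟨x, h⟩, x⟫ : ℝ) : EReal) else ⊤) (u : S) :
    0 ≤ ⟪L u, (u : E)⟫ := by
  have hmid := hconv u (-u) (1 / 2) (1 / 2) (by norm_num) (by norm_num) (by norm_num)
  rw [show (1 / 2 : ℝ) • (u : E) + (1 / 2 : ℝ) • -(u : E) = 0 by module, h0,
    ← Submodule.coe_neg, apply_coe_of_gqf hφ, apply_coe_of_gqf hφ, map_neg,
    Submodule.coe_neg, inner_neg_neg] at hmid
  have : (0 : ℝ) ≤ 1 / 2 * ⟪L u, (u : E)⟫ + 1 / 2 * ⟪L u, (u : E)⟫ := by exact_mod_cast hmid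
  linarith

lemma mem_subdiff_iff_of_gqf (hconv : ConvexFn φ) (h0 : φ 0 = 0)
    (hsym : ∀ x y : S, ⟪L x, (y : E)⟫ = ⟪(x : E), L y⟫)
    (hφ : ∀ x : E, φ x = if h : x ∈ S then ((⟪L ⟨x, h⟩, x⟫ : ℝ) : EReal) else ⊤) {x v : E} :
    v ∈ Subdiff φ x ↔ ∃ s : S, (s : E) = x ∧ v - (2 : ℝ) • L s ∈ Sᗮ := by
  constructor
  · intro hv
    have hx : x ∈ S := by
      by_contra hx
      exact ne_top_of_mem_subdiff (y := 0) (by simp [h0]) hv (by simp [hφ, hx])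
    refine ⟨⟨x, hx⟩, rfl, (Submodule.mem_orthogonal' _ _).mpr fun u hu => ?_⟩
    refine eq_zero_of_forall_mul_le_sq_mul (b := ⟪L ⟨u, hu⟩, u⟫) fun t => ?_
    have hle := hv ((⟨x, hx⟩ + t • ⟨u, hu⟩ : S) : E)
    rw [apply_coe_of_gqf hφ ⟨x, hx⟩, apply_coe_of_gqf hφ, inner_map_add_smul_self hsym,
      ← EReal.coe_add, EReal.coe_le_coe_iff] at hle
    simp only [Submodule.coe_add, Submodule.coe_smul, add_sub_cancel_left,
      real_inner_smul_right] at hle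
    rw [inner_sub_left, real_inner_smul_left]
    linarith
  · rintro ⟨s, rfl, hw⟩ y
    by_cases hy : y ∈ S
    · set u : S := ⟨y, hy⟩ - s
      have hyu : y = ((s + (1 : ℝ) • u : S) : E) := by simp [u]
      have hwu := (Submodule.mem_orthogonal' _ _).mp hw u u.2
      have hu := inner_map_self_nonneg_of_gqf hconv h0 hφ u
      rw [hyu, apply_coe_of_gqf hφ, apply_coe_of_gqf hφ, inner_map_add_smul_self hsym,
        ← EReal.coe_add, EReal.coe_le_coe_iff]
      simp only [Submodule.coe_add, one_smul, add_sub_cancel_left]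
      rw [inner_sub_left, real_inner_smul_left] at hwu
      linarith
    · simp [hφ, hy]

lemma exists_submodule_coe_eq_graph_subdiff_of_gqf (hconv : ConvexFn φ) (h0 : φ 0 = 0)
    (hsym : ∀ x y : S, ⟪L x, (y : E)⟫ = ⟪(x : E), L y⟫)
    (hφ : ∀ x : E, φ x = if h : x ∈ S then ((⟪L ⟨x, h⟩, x⟫ : ℝ) : EReal) else ⊤) :
    ∃ G : Submodule ℝ (E × E), (G : Set (E × E)) = {p | p.2 ∈ Subdiff φ p.1} := by
  refine ⟨LinearMap.range ((S.subtype ∘ₗ LinearMap.fst ℝ S Sᗮ).prod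
    ((2 : ℝ) • L ∘ₗ LinearMap.fst ℝ S Sᗮ + Sᗮ.subtype ∘ₗ LinearMap.snd ℝ S Sᗮ)), ?_⟩
  ext ⟨x, v⟩
  simp only [SetLike.mem_coe, LinearMap.mem_range, Set.mem_ofPred_eq,
    mem_subdiff_iff_of_gqf hconv h0 hsym hφ]
  constructor
  · rintro ⟨⟨s, w⟩, hsw⟩
    obtain ⟨rfl, rfl⟩ := Prod.ext_iff.mp hsw
    exact ⟨s, rfl, by simp⟩
  · rintro ⟨s, rfl, hw⟩
    exact ⟨(s, ⟨_, hw⟩), by simp⟩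

end GQF

section Proximal

variable {n : ℕ} {φ : EuclideanSpace ℝ (Fin n) → EReal} {x y p : EuclideanSpace ℝ (Fin n)}
  {c r : ℝ}

local notation "E" => EuclideanSpace ℝ (Fin n)

lemma ne_top_of_add_coe_le_coe (h : φ y + ((c * ‖y - x‖ ^ 2 : ℝ) : EReal) ≤ r) : φ y ≠ ⊤ := by
  intro hy
  rw [hy, EReal.top_add_of_ne_bot (EReal.coe_ne_bot _), top_le_iff] at h
  exact EReal.coe_ne_top r h

lemma mul_norm_sub_sq_le_of_add_coe_le_coe (hnn : 0 ≤ φ y)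
    (h : φ y + ((c * ‖y - x‖ ^ 2 : ℝ) : EReal) ≤ r) : c * ‖y - x‖ ^ 2 ≤ r := by
  have : ((c * ‖y - x‖ ^ 2 : ℝ) : EReal) ≤ r :=
    le_trans (le_add_of_nonneg_left hnn) h
  exact_mod_cast this

lemma smul_sub_mem_subdiff_of_forall_le_add_sq (hbot : ∀ y, φ y ≠ ⊥) (hconv : ConvexFn φ)
    (hp : φ p ≠ ⊤)
    (hmin : ∀ y, φ p + ((c * ‖p - x‖ ^ 2 : ℝ) : EReal) ≤ φ y + ((c * ‖y - x‖ ^ 2 : ℝ) : EReal)) :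
    (2 * c) • (x - p) ∈ Subdiff φ p := by
  rw [mem_subdiff_iff_toReal hbot hp]
  intro y hy
  set P := (φ p).toReal
  set Y := (φ y).toReal
  suffices ⟪(2 * c) • (x - p), y - p⟫ - (Y - P) ≤ 0 by linarith
  refine nonpos_of_forall_mul_le_sq_mul (b := c * ‖y - p‖ ^ 2) fun t ht ht1 => ?_
  have hseg : φ ((1 - t) • p + t • y) ≤ (((1 - t) * P + t * Y : ℝ) : EReal) := by
    have := hconv p y (1 - t) t (by linarith) ht.le (by ring)
    rwa [← EReal.coe_toReal hp (hbot p), ← EReal.coe_toReal hy (hbot y)] at this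
  have hcmp : P + c * ‖p - x‖ ^ 2 ≤ (1 - t) * P + t * Y + c * ‖(1 - t) • p + t • y - x‖ ^ 2 := by
    have := (hmin _).trans (add_le_add_left hseg _)
    rw [← EReal.coe_toReal hp (hbot p)] at this
    exact_mod_cast this
  have hnorm : ‖(1 - t) • p + t • y - x‖ ^ 2 =
      ‖p - x‖ ^ 2 + 2 * t * ⟪p - x, y - p⟫ + t ^ 2 * ‖y - p‖ ^ 2 := by
    rw [show (1 - t) • p + t • y - x = (p - x) + t • (y - p) by module, norm_add_sq_real,
      real_inner_smul_right, norm_smul, mul_pow, Real.norm_eq_abs, sq_abs]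
    ring
  have hinner : ⟪(2 * c) • (x - p), y - p⟫ = -(2 * c) * ⟪p - x, y - p⟫ := by
    rw [real_inner_smul_left, ← neg_sub p x, inner_neg_left]
    ring
  rw [hnorm] at hcmp
  rw [hinner]
  nlinarith

lemma exists_smul_sub_mem_subdiff_mul_norm_sub_sq_le (hbot : ∀ y, φ y ≠ ⊥)
    (hlsc : LowerSemicontinuous φ) (hconv : ConvexFn φ) (hnn : ∀ y, 0 ≤ φ y) (hx : φ x ≠ ⊤)
    {c : ℝ} (hc : 0 < c) :
    ∃ p, (2 * c) • (x - p) ∈ Subdiff φ p ∧ c * ‖p - x‖ ^ 2 ≤ (φ x).toReal := by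
  set r := (φ x).toReal
  set ψ : E → EReal := fun y => φ y + ((c * ‖y - x‖ ^ 2 : ℝ) : EReal)
  have hψx : ψ x = r := by simp [ψ, r, EReal.coe_toReal hx (hbot x)]
  have hψlsc : LowerSemicontinuous ψ :=
    hlsc.add' (continuous_coe_real_ereal.comp (by fun_prop)).lowerSemicontinuous
      fun y => EReal.continuousAt_add (Or.inr (EReal.coe_ne_bot _)) (Or.inr (EReal.coe_ne_top _))
  have hbdd : Bornology.IsBounded {y | ψ y ≤ ψ x} := by
    refine (Metric.isBounded_closedBall (x := x) (r := √(r / c))).subset fun y hy => ?_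
    have hy : c * ‖y - x‖ ^ 2 ≤ r :=
      mul_norm_sub_sq_le_of_add_coe_le_coe (hnn y) (hψx ▸ hy)
    rw [Metric.mem_closedBall, dist_eq_norm, Real.le_sqrt (norm_nonneg _)
      (div_nonneg (EReal.toReal_nonneg (hnn x)) hc.le), le_div_iff₀ hc]
    linarith
  obtain ⟨p, hp⟩ := hψlsc.exists_forall_le_of_isBounded x hbdd
  have hpr : ψ p ≤ r := hψx ▸ hp x
  exact ⟨p, smul_sub_mem_subdiff_of_forall_le_add_sq hbot hconv (ne_top_of_add_coe_le_coe hpr) hp,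
    mul_norm_sub_sq_le_of_add_coe_le_coe (hnn p) hpr⟩

lemma mem_closure_setOf_subdiff_nonempty (hbot : ∀ y, φ y ≠ ⊥) (hlsc : LowerSemicontinuous φ)
    (hconv : ConvexFn φ) (hnn : ∀ y, 0 ≤ φ y) (hx : φ x ≠ ⊤) :
    x ∈ closure {p | (Subdiff φ p).Nonempty} := by
  rw [Metric.mem_closure_iff]
  intro ε hε
  set r := (φ x).toReal
  have hr : 0 ≤ r := EReal.toReal_nonneg (hnn x)
  have hc : 0 < (r + 1) / ε ^ 2 := by positivity
  obtain ⟨p, hp, hdist⟩ := exists_smul_sub_mem_subdiff_mul_norm_sub_sq_le hbot hlsc hconv hnn hx hc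
  refine ⟨p, ⟨_, hp⟩, ?_⟩
  have hsq : (r + 1) / ε ^ 2 * ‖p - x‖ ^ 2 < (r + 1) / ε ^ 2 * ε ^ 2 := by
    rw [div_mul_cancel₀ _ (by positivity)]
    linarith
  rw [dist_comm, dist_eq_norm]
  exact lt_of_pow_lt_pow_left₀ 2 hε.le (lt_of_mul_lt_mul_left hsq hc.le)

end Proximal

section GraphSubdiff

variable {n : ℕ} {φ : EuclideanSpace ℝ (Fin n) → EReal}
  {G : Submodule ℝ (EuclideanSpace ℝ (Fin n) × EuclideanSpace ℝ (Fin n))}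
  {x y v w : EuclideanSpace ℝ (Fin n)}

local notation "E" => EuclideanSpace ℝ (Fin n)

lemma mem_subdiff_of_mem_graph (hG : (G : Set (E × E)) = {p | p.2 ∈ Subdiff φ p.1})
    (hxv : (x, v) ∈ G) : v ∈ Subdiff φ x :=
  Set.ext_iff.mp hG _ |>.mp hxv

lemma nonneg_of_coe_eq_graph_subdiff (h0 : φ 0 = 0)
    (hG : (G : Set (E × E)) = {p | p.2 ∈ Subdiff φ p.1}) (y : E) : 0 ≤ φ y := by
  simpa [h0] using mem_subdiff_of_mem_graph hG (x := 0) (v := 0) G.zero_mem y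

lemma toReal_eq_half_inner_of_mem_graph (hbot : ∀ x, φ x ≠ ⊥) (h0 : φ 0 = 0)
    (hG : (G : Set (E × E)) = {p | p.2 ∈ Subdiff φ p.1}) (hxv : (x, v) ∈ G) :
    (φ x).toReal = ⟪v, x⟫ / 2 :=
  toReal_eq_half_inner_of_forall_smul_mem_subdiff hbot h0 fun t =>
    mem_subdiff_of_mem_graph hG (G.smul_mem t hxv)

lemma inner_comm_of_mem_graph (hbot : ∀ x, φ x ≠ ⊥) (h0 : φ 0 = 0)
    (hG : (G : Set (E × E)) = {p | p.2 ∈ Subdiff φ p.1}) (hxv : (x, v) ∈ G) (hyw : (y, w) ∈ G) :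
    ⟪v, y⟫ = ⟪w, x⟫ := by
  have hfin : ∀ {z u : E}, (z, u) ∈ G → φ z ≠ ⊤ := fun hzu =>
    ne_top_of_mem_subdiff (y := 0) (by simp [h0]) (mem_subdiff_of_mem_graph hG hzu)
  have key : ∀ t : ℝ, t * (⟪v, y⟫ - ⟪w, x⟫) ≤ t ^ 2 * ⟪w, y⟫ := fun t => by
    have hmem : (x + t • y, v + t • w) ∈ G := G.add_mem hxv (G.smul_mem t hyw)
    have h := (mem_subdiff_iff_toReal hbot (hfin hxv)).mp (mem_subdiff_of_mem_graph hG hxv)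
      _ (hfin hmem)
    rw [toReal_eq_half_inner_of_mem_graph hbot h0 hG hxv,
      toReal_eq_half_inner_of_mem_graph hbot h0 hG hmem, add_sub_cancel_left] at h
    simp only [inner_add_left, inner_add_right, real_inner_smul_left,
      real_inner_smul_right] at h
    linarith
  linarith [eq_zero_of_forall_mul_le_sq_mul key]

lemma isGQF_of_coe_eq_graph_subdiff (hbot : ∀ x, φ x ≠ ⊥) (hlsc : LowerSemicontinuous φ)
    (hconv : ConvexFn φ) (h0 : φ 0 = 0)
    (hG : (G : Set (E × E)) = {p | p.2 ∈ Subdiff φ p.1}) : IsGQF φ := by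
  set f : G →ₗ[ℝ] E := LinearMap.fst ℝ E E ∘ₗ G.subtype
  obtain ⟨σ, hσ⟩ := f.rangeRestrict.exists_rightInverse_of_surjective f.range_rangeRestrict
  have hσ₁ : ∀ s, ((σ s : E × E).1) = s := fun s => congrArg Subtype.val (LinearMap.congr_fun hσ s)
  have hσG : ∀ s : LinearMap.range f, ((s : E), (σ s : E × E).2) ∈ G := fun s => hσ₁ s ▸ (σ s).2
  refine ⟨LinearMap.range f, (1 / 2 : ℝ) • (LinearMap.snd ℝ E E ∘ₗ G.subtype ∘ₗ σ),
    fun s t => ?_, fun x => ?_⟩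
  · simp only [LinearMap.smul_apply, LinearMap.comp_apply, Submodule.subtype_apply,
      LinearMap.snd_apply, real_inner_smul_left, real_inner_smul_right]
    rw [inner_comm_of_mem_graph hbot h0 hG (hσG s) (hσG t), real_inner_comm]
  split_ifs with hx
  · have hxG := hσG ⟨x, hx⟩
    rw [← EReal.coe_toReal (ne_top_of_mem_subdiff (y := 0) (by simp [h0])
      (mem_subdiff_of_mem_graph hG hxG)) (hbot x), toReal_eq_half_inner_of_mem_graph hbot h0 hG hxG]
    simp only [LinearMap.smul_apply, LinearMap.comp_apply, Submodule.subtype_apply,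
      LinearMap.snd_apply, real_inner_smul_left]
    ring_nf
  · by_contra hne
    have hdom : {p | (Subdiff φ p).Nonempty} ⊆ LinearMap.range f := by
      rintro p ⟨u, hu⟩
      exact ⟨⟨(p, u), (Set.ext_iff.mp hG _).mpr hu⟩, rfl⟩
    exact hx (closure_minimal hdom (Submodule.closed_of_finiteDimensional _)
      (mem_closure_setOf_subdiff_nonempty hbot hlsc hconv
        (nonneg_of_coe_eq_graph_subdiff h0 hG) hne))

end GraphSubdiff

theorem statement1 {n : ℕ} (φ : EuclideanSpace ℝ (Fin n) → EReal)
    (hproper : ProperFn φ) (hlsc : LowerSemicontinuous φ) (hconv : ConvexFn φ)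
    (h0 : φ 0 = 0) :
    IsGQF φ ↔
      ∃ G : Submodule ℝ (EuclideanSpace ℝ (Fin n) × EuclideanSpace ℝ (Fin n)),
        (G : Set (EuclideanSpace ℝ (Fin n) × EuclideanSpace ℝ (Fin n))) =
          {p | p.2 ∈ Subdiff φ p.1} := by
  constructor
  · rintro ⟨S, L, hsym, hφ⟩
    exact exists_submodule_coe_eq_graph_subdiff_of_gqf hconv h0 hsym hφ
  · rintro ⟨G, hG⟩
    exact isGQF_of_coe_eq_graph_subdiff hproper.1 hlsc hconv h0 hG

end
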